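/- For all integers n ≥ 2 and k ≥ 2, every eigenvalue λ of the adjacency matrix of W_{n,k} over ℝ satisfies: λ ∈ {−1, 1}, or k − 1 ≤ λ ≤ k + 1, or −(k+1) ≤ λ ≤ −(k−1). In particular, W_{n,k} has no eigenvalue in the open interval (−1, 1). -/

import Mathlib

open Polynomial

/-- Vertex set of `W n k`: `Sum.inl (i, j)` is the vertex `v_{i,j}` and
`Sum.inr (i, j)` is the vertex `w_{i,j}`, for `i ∈ ℤ/nℤ` and `j ∈ {1, …, k}`. -/
abbrev WVert (n k : ℕ) : Type := (ZMod n × Fin k) ⊕ (ZMod n × Fin k)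

/-- Adjacency of `W n k`: `v_{i,j} ~ w_{i',l}` iff `i' = i`, or `i = i' + 1` and `j = l`. -/
def WAdj (n k : ℕ) : WVert n k → WVert n k → Prop
  | Sum.inl p, Sum.inr q => q.1 = p.1 ∨ (p.1 = q.1 + 1 ∧ p.2 = q.2)
  | Sum.inr q, Sum.inl p => q.1 = p.1 ∨ (p.1 = q.1 + 1 ∧ p.2 = q.2)
  | Sum.inl _, Sum.inl _ => False
  | Sum.inr _, Sum.inr _ => False

/-- The graph `W_{n,k}`: vertices `v_{i,j}` and `w_{i,j}` (`i ∈ ℤ/nℤ`, `1 ≤ j ≤ k`),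
with edges `v_{i,j} w_{i,l}` for all `i, j, l`, and `w_{i,j} v_{i+1,j}` for all `i, j`. -/
def W (n k : ℕ) : SimpleGraph (WVert n k) where
  Adj := WAdj n k
  symm := by
    constructor
    rintro (p | p) (q | q) h
    · exact h.elim
    · exact h
    · exact h
    · exact h.elim
  loopless := ⟨by rintro (p | p) h <;> exact h⟩

instance (n k : ℕ) : DecidableRel (WAdj n k) := fun a b =>
  match a, b with
  | Sum.inl p, Sum.inr q =>
      inferInstanceAs (Decidable (q.1 = p.1 ∨ (p.1 = q.1 + 1 ∧ p.2 = q.2)))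
  | Sum.inr q, Sum.inl p =>
      inferInstanceAs (Decidable (q.1 = p.1 ∨ (p.1 = q.1 + 1 ∧ p.2 = q.2)))
  | Sum.inl _, Sum.inl _ => inferInstanceAs (Decidable False)
  | Sum.inr _, Sum.inr _ => inferInstanceAs (Decidable False)

instance (n k : ℕ) : DecidableRel (W n k).Adj :=
  inferInstanceAs (DecidableRel (WAdj n k))

/-!
The adjacency matrix of `W n k` is `A = [[0, B], [Bᵀ, 0]]` with `B = 1 ⊗ J + P ⊗ 1`, where `P` is
the cyclic shift on `ZMod n` and `J` the all-ones `k × k` matrix. Since `P` is orthogonal,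
`B Bᵀ = Bᵀ B = 1 + Q ⊗ J` with `Q = k + P + Pᵀ`, and writing `Q - (k - 2) = (1 + P)ᵀ(1 + P)`,
`(k + 2) - Q = (1 - P)ᵀ(1 - P)` gives `k - 2 ≤ Q ≤ k + 2` in the Loewner order. As `J² = k J`,
the matrices `D (D - k(k-2))` and `D (k(k+2) - D)` for `D = Q ⊗ J` are `k` times
`Q (Q - (k-2)) ⊗ J` and `Q ((k+2) - Q) ⊗ J`, products of commuting nonnegative matrices tensored
with `J`, hence nonnegative. So every eigenvalue of `D` is `0` or lies in `[k(k-2), k(k+2)]`,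
and for an eigenvalue `μ` of `A`, `μ² - 1` is an eigenvalue of `A² - 1 = diag(D, D)`; finally
`k(k ∓ 2) + 1 = (k ∓ 1)²`.
-/

open Matrix
open scoped Kronecker MatrixOrder

theorem spectrum.eval_nonneg_of_aeval_nonneg {A : Type*} [Ring A] [PartialOrder A] [Algebra ℝ A]
    [NonnegSpectrumClass ℝ A] {a : A} {p : ℝ[X]} (hp : 0 ≤ aeval a p) {t : ℝ}
    (ht : t ∈ spectrum ℝ a) : 0 ≤ p.eval t :=
  spectrum_nonneg_of_nonneg hp (spectrum.subset_polynomial_aeval a p ⟨t, ht, rfl⟩)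

namespace Matrix

theorem sub_kronecker {R l m n p : Type*} [Ring R] (A B : Matrix l m R) (C : Matrix n p R) :
    (A - B) ⊗ₖ C = A ⊗ₖ C - B ⊗ₖ C := by
  ext; simp [sub_mul]

variable {ι κ : Type*} [Fintype ι] [Fintype κ]

theorem spectrum_fromBlocks_zero_subset [DecidableEq ι] [DecidableEq κ] {R : Type*} [CommRing R]
    (X : Matrix ι ι R) (Y : Matrix κ κ R) :
    spectrum R (fromBlocks X 0 0 Y) ⊆ spectrum R X ∪ spectrum R Y := by
  intro t ht
  contrapose! ht
  simp only [Set.mem_union, spectrum.mem_iff, not_or, not_not, isUnit_iff_isUnit_det] at ht ⊢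
  have hblock : algebraMap R _ t - fromBlocks X 0 0 Y =
      fromBlocks (algebraMap R _ t - X) 0 0 (algebraMap R _ t - Y) := by
    simp [Algebra.algebraMap_eq_smul_one, ← fromBlocks_one, fromBlocks_smul, sub_eq_add_neg,
      fromBlocks_neg, fromBlocks_add]
  rw [hblock, det_fromBlocks_zero₂₁]
  exact ht.1.mul ht.2

theorem permMatrix_mem_orthogonalGroup [DecidableEq ι] {R : Type*} [CommRing R]
    (σ : Equiv.Perm ι) : σ.permMatrix R ∈ orthogonalGroup ι R := by
  rw [mem_orthogonalGroup_iff, transpose_permMatrix, ← permMatrix_mul, inv_mul_cancel,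
    permMatrix_one]

section Orthogonal

variable [DecidableEq ι] {P : Matrix ι ι ℝ}

theorem neg_two_smul_one_le_add_transpose (hP : P ∈ orthogonalGroup ι ℝ) :
    (-2 : ℝ) • 1 ≤ P + Pᵀ := by
  have h : P + Pᵀ - (-2 : ℝ) • 1 = star (1 + P) * (1 + P) := by
    rw [star_eq_conjTranspose, conjTranspose_eq_transpose_of_trivial, transpose_add,
      transpose_one, add_mul, one_mul, mul_add, mul_one, (mem_orthogonalGroup_iff' ι ℝ).1 hP]
    module
  exact sub_nonneg.1 (h ▸ star_mul_self_nonneg _)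

theorem add_transpose_le_two_smul_one (hP : P ∈ orthogonalGroup ι ℝ) :
    P + Pᵀ ≤ (2 : ℝ) • 1 := by
  have h : (2 : ℝ) • 1 - (P + Pᵀ) = star (1 - P) * (1 - P) := by
    rw [star_eq_conjTranspose, conjTranspose_eq_transpose_of_trivial, transpose_sub,
      transpose_one, sub_mul, one_mul, mul_sub, mul_one, (mem_orthogonalGroup_iff' ι ℝ).1 hP]
    module
  exact sub_nonneg.1 (h ▸ star_mul_self_nonneg _)

end Orthogonal

variable (κ) in
def allOnes : Matrix κ κ ℝ := of fun _ _ => 1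

theorem allOnes_nonneg : 0 ≤ allOnes κ := by
  simpa [allOnes, vecMulVec] using (posSemidef_vecMulVec_self_star (1 : κ → ℝ)).nonneg

theorem allOnes_mul_allOnes : allOnes κ * allOnes κ = (Fintype.card κ : ℝ) • allOnes κ := by
  ext; simp [allOnes, mul_apply]

theorem kronecker_allOnes_mul_kronecker_allOnes (X Y : Matrix ι ι ℝ) :
    (X ⊗ₖ allOnes κ) * (Y ⊗ₖ allOnes κ) = (Fintype.card κ : ℝ) • ((X * Y) ⊗ₖ allOnes κ) := by
  rw [← mul_kronecker_mul, allOnes_mul_allOnes, kronecker_smul]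

theorem spectrum_kronecker_allOnes_subset [DecidableEq ι] [DecidableEq κ] {Q : Matrix ι ι ℝ}
    {a b : ℝ} (ha : 0 ≤ a) (hQa : a • 1 ≤ Q) (hQb : Q ≤ b • 1) :
    spectrum ℝ (Q ⊗ₖ allOnes κ) ⊆
      insert 0 (Set.Icc (Fintype.card κ * a) (Fintype.card κ * b)) := by
  intro t ht
  set c : ℝ := (Fintype.card κ : ℝ)
  have hQ : 0 ≤ Q := (smul_nonneg ha zero_le_one).trans hQa
  have hkron {Y : Matrix ι ι ℝ} (hY : 0 ≤ Y) : 0 ≤ Y ⊗ₖ allOnes κ :=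
    (hY.posSemidef.kronecker allOnes_nonneg.posSemidef).nonneg
  have hlow : 0 ≤ Q * (Q - a • 1) :=
    (Commute.refl Q).sub_right ((Commute.one_right Q).smul_right a) |>.mul_nonneg hQ
      (sub_nonneg.2 hQa)
  have hhigh : 0 ≤ Q * (b • 1 - Q) :=
    ((Commute.one_right Q).smul_right b).sub_right (Commute.refl Q) |>.mul_nonneg hQ
      (sub_nonneg.2 hQb)
  have h0 : 0 ≤ t := spectrum_nonneg_of_nonneg (hkron hQ) ht
  have heval {p : ℝ[X]} {Y : Matrix ι ι ℝ} (hY : 0 ≤ Y)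
      (hp : aeval (Q ⊗ₖ allOnes κ) p = (c • Y) ⊗ₖ allOnes κ) : 0 ≤ p.eval t :=
    spectrum.eval_nonneg_of_aeval_nonneg
      (hp ▸ hkron (hY.posSemidef.smul (Nat.cast_nonneg _)).nonneg) ht
  have h1 : 0 ≤ t * (t - c * a) := by
    refine (heval (p := X * (X - C (c * a))) hlow ?_).trans_eq (by simp)
    simp [mul_sub, kronecker_allOnes_mul_kronecker_allOnes, sub_kronecker, smul_kronecker,
      Algebra.algebraMap_eq_smul_one]
    module
  have h2 : 0 ≤ t * (c * b - t) := by
    refine (heval (p := X * (C (c * b) - X)) hhigh ?_).trans_eq (by simp)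
    simp [mul_sub, kronecker_allOnes_mul_kronecker_allOnes, sub_kronecker, smul_kronecker,
      Algebra.algebraMap_eq_smul_one]
    module
  rcases h0.eq_or_lt with h | h
  · exact Set.mem_insert_iff.2 (.inl h.symm)
  · exact Set.mem_insert_of_mem _ ⟨by nlinarith, by nlinarith⟩

variable [DecidableEq ι] [DecidableEq κ]

variable (κ) in
def blockBiadj (P : Matrix ι ι ℝ) : Matrix (ι × κ) (ι × κ) ℝ :=
  1 ⊗ₖ allOnes κ + P ⊗ₖ 1

variable {P : Matrix ι ι ℝ}

theorem blockBiadj_mul_transpose (hP : P ∈ orthogonalGroup ι ℝ) :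
    blockBiadj κ P * (blockBiadj κ P)ᵀ =
      ((Fintype.card κ : ℝ) • 1 + (P + Pᵀ)) ⊗ₖ allOnes κ + 1 := by
  have hJ : (allOnes κ)ᵀ = allOnes κ := rfl
  simp only [blockBiadj, transpose_add, ← kroneckerMap_transpose, transpose_one, hJ, add_mul,
    mul_add, ← mul_kronecker_mul, one_mul, mul_one, allOnes_mul_allOnes,
    (mem_orthogonalGroup_iff ι ℝ).1 hP, one_kronecker_one, kronecker_smul, add_kronecker,
    smul_kronecker]
  abel

theorem transpose_mul_blockBiadj (hP : P ∈ orthogonalGroup ι ℝ) :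
    (blockBiadj κ P)ᵀ * blockBiadj κ P =
      ((Fintype.card κ : ℝ) • 1 + (P + Pᵀ)) ⊗ₖ allOnes κ + 1 := by
  have hJ : (allOnes κ)ᵀ = allOnes κ := rfl
  simp only [blockBiadj, transpose_add, ← kroneckerMap_transpose, transpose_one, hJ, add_mul,
    mul_add, ← mul_kronecker_mul, one_mul, mul_one, allOnes_mul_allOnes,
    (mem_orthogonalGroup_iff' ι ℝ).1 hP, one_kronecker_one, kronecker_smul, add_kronecker,
    smul_kronecker]
  abel

theorem sq_eq_one_or_mem_Icc_of_mem_spectrum_blockBiadj (hP : P ∈ orthogonalGroup ι ℝ)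
    (hκ : 2 ≤ Fintype.card κ) {μ : ℝ}
    (hμ : μ ∈ spectrum ℝ (fromBlocks 0 (blockBiadj κ P) (blockBiadj κ P)ᵀ 0)) :
    μ ^ 2 = 1 ∨
      μ ^ 2 ∈ Set.Icc (((Fintype.card κ : ℝ) - 1) ^ 2) (((Fintype.card κ : ℝ) + 1) ^ 2) := by
  set c : ℝ := (Fintype.card κ : ℝ)
  set A := fromBlocks 0 (blockBiadj κ P) (blockBiadj κ P)ᵀ 0
  set D := (c • 1 + (P + Pᵀ)) ⊗ₖ allOnes κ
  have hc : 2 ≤ c := Nat.ofNat_le_cast.2 hκ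
  have hsq : μ ^ 2 - 1 ∈ spectrum ℝ (A ^ 2 - 1) := by
    have h := spectrum.subset_polynomial_aeval A (X ^ 2 - 1) ⟨μ, hμ, rfl⟩
    simpa only [eval_sub, eval_pow, eval_X, eval_one, map_sub, map_pow, aeval_X, map_one] using h
  have hA : A ^ 2 - 1 = fromBlocks D 0 0 D := by
    rw [sq, fromBlocks_multiply, ← fromBlocks_one, sub_eq_add_neg, fromBlocks_neg,
      fromBlocks_add]
    simp [blockBiadj_mul_transpose hP, transpose_mul_blockBiadj hP, D, c]
  have hD : μ ^ 2 - 1 ∈ spectrum ℝ D := by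
    simpa using spectrum_fromBlocks_zero_subset D D (hA ▸ hsq)
  have hlow : (c - 2) • (1 : Matrix ι ι ℝ) ≤ c • 1 + (P + Pᵀ) := by
    rw [sub_eq_add_neg, add_smul]
    exact add_le_add le_rfl (by simpa using neg_two_smul_one_le_add_transpose hP)
  have hhigh : c • 1 + (P + Pᵀ) ≤ (c + 2) • (1 : Matrix ι ι ℝ) := by
    rw [add_smul]
    exact add_le_add le_rfl (add_transpose_le_two_smul_one hP)
  rcases spectrum_kronecker_allOnes_subset (by linarith) hlow hhigh hD with h | ⟨h1, h2⟩
  · exact .inl (by linarith)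
  · exact .inr ⟨by nlinarith, by nlinarith⟩

end Matrix

def cyclicShift (n : ℕ) : Matrix (ZMod n) (ZMod n) ℝ :=
  Equiv.Perm.permMatrix ℝ (Equiv.subRight (1 : ZMod n))

theorem blockBiadj_cyclicShift_apply {n k : ℕ} (hn : 2 ≤ n) (p q : ZMod n × Fin k) :
    blockBiadj (Fin k) (cyclicShift n) p q =
      if q.1 = p.1 ∨ (p.1 = q.1 + 1 ∧ p.2 = q.2) then 1 else 0 := by
  have : Fact (1 < n) := ⟨hn⟩
  simp only [blockBiadj, cyclicShift, Matrix.add_apply, kroneckerMap_apply, allOnes, of_apply,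
    one_apply, PEquiv.toMatrix_apply, Equiv.toPEquiv_apply, Option.mem_def, Option.some.injEq,
    Equiv.subRight_apply, sub_eq_iff_eq_add]
  have hne : q.1 ≠ q.1 + 1 := by simp
  by_cases h1 : p.1 = q.1
  · simp [h1, hne]
  · by_cases h2 : p.1 = q.1 + 1 <;> by_cases h3 : p.2 = q.2 <;> simp [h1, h2, h3, Ne.symm h1]

theorem adjMatrix_W {n k : ℕ} [NeZero n] (hn : 2 ≤ n) :
    (W n k).adjMatrix ℝ = fromBlocks 0 (blockBiadj (Fin k) (cyclicShift n))
      (blockBiadj (Fin k) (cyclicShift n))ᵀ 0 := by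
  ext (p | p) (q | q) <;> simp only [SimpleGraph.adjMatrix_apply]
  · simp [W, WAdj]
  · rw [fromBlocks_apply₁₂, blockBiadj_cyclicShift_apply hn]; rfl
  · rw [fromBlocks_apply₂₁, transpose_apply, blockBiadj_cyclicShift_apply hn]; rfl
  · simp [W, WAdj]

/-- Every eigenvalue `μ` of `W_{n,k}` is `±1`, or lies in `[k−1, k+1]`, or lies in
`[−(k+1), −(k−1)]`; in particular `W_{n,k}` has no eigenvalue in the open interval
`(−1, 1)`. -/
theorem W_eigenvalue_location (n k : ℕ) [NeZero n] (hn : 2 ≤ n) (hk : 2 ≤ k) :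
    (∀ μ ∈ spectrum ℝ ((W n k).adjMatrix ℝ),
        μ = -1 ∨ μ = 1 ∨ ((k : ℝ) - 1 ≤ μ ∧ μ ≤ (k : ℝ) + 1) ∨
          (-((k : ℝ) + 1) ≤ μ ∧ μ ≤ -((k : ℝ) - 1))) ∧
      ∀ μ ∈ spectrum ℝ ((W n k).adjMatrix ℝ), μ ∉ Set.Ioo (-1 : ℝ) 1 := by
  have location : ∀ μ ∈ spectrum ℝ ((W n k).adjMatrix ℝ),
      μ = -1 ∨ μ = 1 ∨ ((k : ℝ) - 1 ≤ μ ∧ μ ≤ (k : ℝ) + 1) ∨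
        (-((k : ℝ) + 1) ≤ μ ∧ μ ≤ -((k : ℝ) - 1)) := by
    intro μ hμ
    rw [adjMatrix_W hn] at hμ
    have hk₁ : (1 : ℝ) ≤ k := by exact_mod_cast (by omega : 1 ≤ k)
    rcases sq_eq_one_or_mem_Icc_of_mem_spectrum_blockBiadj (permMatrix_mem_orthogonalGroup _)
      (by simpa using hk) hμ with h | ⟨hlo, hhi⟩
    · rcases sq_eq_one_iff.1 h with h | h <;> simp [h]
    · simp only [Fintype.card_fin] at hlo hhi
      rcases le_total 0 μ with h0 | h0
      · exact .inr (.inr (.inl ⟨by nlinarith, by nlinarith⟩))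
      · exact .inr (.inr (.inr ⟨by nlinarith, by nlinarith⟩))
  have hk₂ : (2 : ℝ) ≤ k := by exact_mod_cast hk
  refine ⟨location, fun μ hμ ⟨h1, h2⟩ => ?_⟩
  rcases location μ hμ with h | h | h | h
  · linarith
  · linarith
  · linarith [h.1]
  · linarith [h.2]
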